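/- In the complete bipartite double-oral-auction mechanism, the potential Φ_P = Σ_{S} P(S) + Σ_{B} (1 − P(B)) is non-increasing during any maximal interval of time in which the number of matched pairs stays constant; moreover Φ_P is always an integer multiple of ε and is bounded above by n. -/

import Mathlib

open Finset

/-- A market: buyers `B`, sellers `S`, trading edges `E`, valuations in `[0,1]`. -/
structure Market (B S : Type*) [Fintype B] [Fintype S] where
  E : Finset (B × S)
  valB : B → ℝ
  valS : S → ℝ
  valB_nonneg : ∀ b, 0 ≤ valB b
  valB_le_one : ∀ b, valB b ≤ 1
  valS_nonneg : ∀ s, 0 ≤ valS s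
  valS_le_one : ∀ s, valS s ≤ 1

/-- A state of the market: prices submitted by buyers and sellers, and a matching. -/
structure MState (B S : Type*) where
  PB : B → ℝ
  PS : S → ℝ
  M : Finset (B × S)

variable {B S : Type*} [Fintype B] [Fintype S]

/-- `Mat` is a matching contained in the edge set. -/
def IsMatching (Mk : Market B S) (Mat : Finset (B × S)) : Prop :=
  Mat ⊆ Mk.E ∧ (∀ p ∈ Mat, ∀ q ∈ Mat, p.1 = q.1 → p = q) ∧
    (∀ p ∈ Mat, ∀ q ∈ Mat, p.2 = q.2 → p = q)

def BMatched (st : MState B S) (b : B) : Prop := ∃ s, (b, s) ∈ st.M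
def SMatched (st : MState B S) (s : S) : Prop := ∃ b, (b, s) ∈ st.M

/-- A valid state: bids below valuations, offers above opportunity costs,
and within a matched pair the bid is at least the offer. -/
def ValidState (Mk : Market B S) (st : MState B S) : Prop :=
  IsMatching Mk st.M ∧ (∀ b, st.PB b ≤ Mk.valB b) ∧ (∀ s, Mk.valS s ≤ st.PS s) ∧
    ∀ p ∈ st.M, st.PS p.2 ≤ st.PB p.1

/-- Social welfare of a matching. -/
def SW (Mk : Market B S) (Mat : Finset (B × S)) : ℝ :=
  ∑ p ∈ Mat, (Mk.valB p.1 - Mk.valS p.2)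

/-- Stable state: no bid above an offer on any edge, unmatched agents submit their
valuations, matched pairs have equal prices. -/
def IsStable (Mk : Market B S) (st : MState B S) : Prop :=
  (∀ p ∈ Mk.E, st.PB p.1 ≤ st.PS p.2) ∧
  (∀ b, ¬ BMatched st b → st.PB b = Mk.valB b) ∧
  (∀ s, ¬ SMatched st s → st.PS s = Mk.valS s) ∧
  ∀ p ∈ st.M, st.PB p.1 = st.PS p.2

/-- ε-stable state. -/
def IsEpsStable (Mk : Market B S) (ε : ℝ) (st : MState B S) : Prop :=
  (∀ p ∈ Mk.E, st.PB p.1 - st.PS p.2 ≤ ε) ∧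
  (∀ b, ¬ BMatched st b → st.PB b = Mk.valB b) ∧
  (∀ s, ¬ SMatched st s → st.PS s = Mk.valS s) ∧
  ∀ p ∈ st.M, st.PB p.1 = st.PS p.2

/-- `x` is an integer multiple of `ε`. -/
def MulEps (ε x : ℝ) : Prop := ∃ k : ℤ, x = k * ε

variable [DecidableEq B] [DecidableEq S]

/-- Seller `s` is ε-interested in buyer `b` bidding `b'`. -/
def SellerInterested (Mk : Market B S) (ε : ℝ) (st : MState B S) (b' : ℝ) (b : B) (s : S) : Prop :=
  (b, s) ∈ Mk.E ∧ ((¬ SMatched st s ∧ st.PS s ≤ b') ∨ (SMatched st s ∧ st.PS s + ε ≤ b'))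

/-- Buyer `b` is ε-interested in seller `s` offering `s'`. -/
def BuyerInterested (Mk : Market B S) (ε : ℝ) (st : MState B S) (s' : ℝ) (s : S) (b : B) : Prop :=
  (b, s) ∈ Mk.E ∧ ((¬ BMatched st b ∧ s' ≤ st.PB b) ∨ (BMatched st b ∧ s' + ε ≤ st.PB b))

/-- Increment rule for a buyer: a new bid is at most (lowest neighbouring offer + ε) and
at most the lowest offer of an unmatched neighbouring seller. -/
def BuyIncrOK (Mk : Market B S) (ε : ℝ) (st : MState B S) (b : B) (b' : ℝ) : Prop :=
  (∀ s, (b, s) ∈ Mk.E → b' ≤ st.PS s + ε) ∧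
  (∀ s, (b, s) ∈ Mk.E → ¬ SMatched st s → b' ≤ st.PS s)

/-- Increment rule for a seller. -/
def SellIncrOK (Mk : Market B S) (ε : ℝ) (st : MState B S) (s : S) (s' : ℝ) : Prop :=
  (∀ b, (b, s) ∈ Mk.E → st.PB b - ε ≤ s') ∧
  (∀ b, (b, s) ∈ Mk.E → ¬ BMatched st b → st.PB b ≤ s')

/-- Match `b` with `s` at price `price`, displacing any previous partner of `s` (resp. `b`)
and equalizing the two submitted prices. -/
def matchPair (st : MState B S) (b : B) (s : S) (price : ℝ) : MState B S where
  PB := Function.update st.PB b price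
  PS := Function.update st.PS s price
  M := insert (b, s) (st.M.filter fun p => p.1 ≠ b ∧ p.2 ≠ s)

/-- One legal move of the DOA mechanism (Mechanism 1): an arbitrary recognized unmatched
agent either submits an improving price (respecting the minimum-increment and increment
rules, when no counterpart is interested) or matches with an ε-interested counterpart,
giving priority to unmatched counterparts. -/
inductive Step (Mk : Market B S) (ε : ℝ) : MState B S → MState B S → Prop
  | buyBid (st : MState B S) (b : B) (b' : ℝ) :
      ¬ BMatched st b → st.PB b < b' → b' ≤ Mk.valB b → MulEps ε b' →
      BuyIncrOK Mk ε st b b' →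
      (∀ s, ¬ SellerInterested Mk ε st b' b s) →
      Step Mk ε st ⟨Function.update st.PB b b', st.PS, st.M⟩
  | buyMatch (st : MState B S) (b : B) (b' : ℝ) (s : S) :
      ¬ BMatched st b → st.PB b ≤ b' → b' ≤ Mk.valB b → MulEps ε b' →
      BuyIncrOK Mk ε st b b' →
      SellerInterested Mk ε st b' b s →
      ((∃ s₀, SellerInterested Mk ε st b' b s₀ ∧ ¬ SMatched st s₀) → ¬ SMatched st s) →
      Step Mk ε st (matchPair st b s b')
  | sellOffer (st : MState B S) (s : S) (s' : ℝ) :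
      ¬ SMatched st s → s' < st.PS s → Mk.valS s ≤ s' → MulEps ε s' →
      SellIncrOK Mk ε st s s' →
      (∀ b, ¬ BuyerInterested Mk ε st s' s b) →
      Step Mk ε st ⟨st.PB, Function.update st.PS s s', st.M⟩
  | sellMatch (st : MState B S) (s : S) (s' : ℝ) (b : B) :
      ¬ SMatched st s → s' ≤ st.PS s → Mk.valS s ≤ s' → MulEps ε s' →
      SellIncrOK Mk ε st s s' →
      BuyerInterested Mk ε st s' s b →
      ((∃ b₀, BuyerInterested Mk ε st s' s b₀ ∧ ¬ BMatched st b₀) → ¬ BMatched st b) →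
      Step Mk ε st (matchPair st b s s')

/-- A valid starting state: valid, bids below offers on every edge, prices in `[0,1]`
and integer multiples of `ε`. -/
def ValidStart (Mk : Market B S) (ε : ℝ) (st : MState B S) : Prop :=
  ValidState Mk st ∧ (∀ p ∈ Mk.E, st.PB p.1 ≤ st.PS p.2) ∧
  (∀ b, 0 ≤ st.PB b) ∧ (∀ s, st.PS s ≤ 1) ∧
  (∀ b, MulEps ε (st.PB b)) ∧ (∀ s, MulEps ε (st.PS s))

/-- Reachability by a sequence of legal moves. -/
def Reachable (Mk : Market B S) (ε : ℝ) : MState B S → MState B S → Prop :=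
  Relation.ReflTransGen (Step Mk ε)

/-- The potential `Φ_P = Σ_S P(S) + Σ_B (1 − P(B))`. -/
def Phi (st : MState B S) : ℝ := ∑ s : S, st.PS s + ∑ b : B, (1 - st.PB b)

/-! Prices live on the grid `εℤ ∩ [0, 1]`, so for prices the mechanism can post, not being
ε-interesting means not exceeding the price on the other side. On a complete graph this makes
the paper's no-over-price lemma an invariant of every run: an unmatched agent's price never
crosses any price on the other side, and matched partners share one price. A step changes
`Φ_P` either by minus the price improvement of one agent or, when `B` and `S` are matched,
by `P(B) - P(S) ≤ 0`. -/

lemma mulEps_iff_mem_zmultiples {ε x : ℝ} : MulEps ε x ↔ x ∈ AddSubgroup.zmultiples ε := by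
  simp only [MulEps, AddSubgroup.mem_zmultiples_iff, zsmul_eq_mul, eq_comm]

lemma MulEps.le_of_lt_add {ε x y : ℝ} (hε : 0 < ε) (hx : MulEps ε x) (hy : MulEps ε y)
    (h : x < y + ε) : x ≤ y := by
  obtain ⟨k, rfl⟩ := hx
  obtain ⟨m, rfl⟩ := hy
  have hkm : (k : ℝ) < m + 1 :=
    lt_of_mul_lt_mul_right (by linarith : k * ε < (m + 1) * ε) hε.le
  have : k ≤ m := by exact_mod_cast Int.lt_add_one_iff.mp (by exact_mod_cast hkm)
  gcongr

lemma Fintype.sum_update_sub_sum {ι M : Type*} [Fintype ι] [DecidableEq ι] [AddCommGroup M]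
    (f : ι → M) (i : ι) (v : M) : ∑ x, Function.update f i v x - ∑ x, f x = v - f i := by
  rw [sum_update_of_mem (mem_univ i), sdiff_singleton_eq_erase, ← add_sum_erase _ f (mem_univ i)]
  abel

def IsGridPrice (ε x : ℝ) : Prop := x ∈ Set.Icc 0 1 ∧ MulEps ε x

lemma forall_isGridPrice_update {ι : Type*} [DecidableEq ι] {ε x : ℝ} {f : ι → ℝ} {i : ι}
    (hf : ∀ j, IsGridPrice ε (f j)) (hx : IsGridPrice ε x) :
    ∀ j, IsGridPrice ε (Function.update f i x j) :=
  (Function.forall_update_iff f fun _ y => IsGridPrice ε y).2 ⟨hx, fun j _ => hf j⟩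

section Interest

variable {B S : Type*} [Fintype B] [Fintype S] {Mk : Market B S} {ε : ℝ} {st : MState B S}
  {b : B} {s : S}

lemma SellerInterested.offer_add_le {b' : ℝ} (h : SellerInterested Mk ε st b' b s)
    (hs : SMatched st s) : st.PS s + ε ≤ b' := by
  rcases h.2 with ⟨hs', -⟩ | ⟨-, h⟩
  exacts [absurd hs hs', h]

lemma SellerInterested.offer_le {b' : ℝ} (hε : 0 ≤ ε) (h : SellerInterested Mk ε st b' b s) :
    st.PS s ≤ b' := by
  rcases h.2 with ⟨-, h⟩ | ⟨-, h⟩ <;> linarith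

lemma le_offer_of_not_sellerInterested {b' : ℝ} (hε : 0 < ε) (hbs : (b, s) ∈ Mk.E)
    (hb' : MulEps ε b') (hs : MulEps ε (st.PS s)) (h : ¬ SellerInterested Mk ε st b' b s) :
    b' ≤ st.PS s := by
  simp only [SellerInterested, hbs, true_and, not_or, not_and, not_le] at h
  by_cases hm : SMatched st s
  · exact hb'.le_of_lt_add hε hs (h.2 hm)
  · exact (h.1 hm).le

lemma BuyerInterested.add_le_bid {s' : ℝ} (h : BuyerInterested Mk ε st s' s b)
    (hb : BMatched st b) : s' + ε ≤ st.PB b := by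
  rcases h.2 with ⟨hb', -⟩ | ⟨-, h⟩
  exacts [absurd hb hb', h]

lemma BuyerInterested.le_bid {s' : ℝ} (hε : 0 ≤ ε) (h : BuyerInterested Mk ε st s' s b) :
    s' ≤ st.PB b := by
  rcases h.2 with ⟨-, h⟩ | ⟨-, h⟩ <;> linarith

lemma bid_le_of_not_buyerInterested {s' : ℝ} (hε : 0 < ε) (hbs : (b, s) ∈ Mk.E)
    (hs' : MulEps ε s') (hb : MulEps ε (st.PB b)) (h : ¬ BuyerInterested Mk ε st s' s b) :
    st.PB b ≤ s' := by
  simp only [BuyerInterested, hbs, true_and, not_or, not_and, not_le] at h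
  by_cases hm : BMatched st b
  · exact hb.le_of_lt_add hε hs' (h.2 hm)
  · exact (h.1 hm).le

end Interest

section MatchPair

variable {B S : Type*} [DecidableEq B] [DecidableEq S] {st : MState B S} {b b₂ : B} {s s₂ : S}
  {x : ℝ}

lemma mem_matchPair_M {p : B × S} :
    p ∈ (matchPair st b s x).M ↔ p = (b, s) ∨ p ∈ st.M ∧ p.1 ≠ b ∧ p.2 ≠ s := by
  simp [matchPair]

lemma not_bMatched_matchPair (h : ¬ BMatched (matchPair st b s x) b₂) :
    b₂ ≠ b ∧ (¬ BMatched st b₂ ∨ (b₂, s) ∈ st.M) := by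
  have hb₂ : b₂ ≠ b := by
    rintro rfl
    exact h ⟨s, mem_matchPair_M.2 (Or.inl rfl)⟩
  refine ⟨hb₂, or_iff_not_imp_right.2 fun hs ⟨s₃, hs₃⟩ => h ⟨s₃, ?_⟩⟩
  exact mem_matchPair_M.2 (Or.inr ⟨hs₃, hb₂, by rintro rfl; exact hs hs₃⟩)

lemma not_sMatched_matchPair (h : ¬ SMatched (matchPair st b s x) s₂) :
    s₂ ≠ s ∧ (¬ SMatched st s₂ ∨ (b, s₂) ∈ st.M) := by
  have hs₂ : s₂ ≠ s := by
    rintro rfl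
    exact h ⟨b, mem_matchPair_M.2 (Or.inl rfl)⟩
  refine ⟨hs₂, or_iff_not_imp_right.2 fun hb ⟨b₃, hb₃⟩ => h ⟨b₃, ?_⟩⟩
  exact mem_matchPair_M.2 (Or.inr ⟨hb₃, by rintro rfl; exact hb hb₃, hs₂⟩)

end MatchPair

section Potential

variable {B S : Type*} [Fintype B] [Fintype S] (st : MState B S) (b : B) (s : S) (x : ℝ)

lemma phi_eq_sum_sub_sum_add_card : Phi st = ∑ s, st.PS s - ∑ b, st.PB b + Fintype.card B := by
  simp only [Phi, sum_sub_distrib, sum_const, card_univ, nsmul_eq_mul, mul_one]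
  ring

lemma phi_update_bid [DecidableEq B] :
    Phi ⟨Function.update st.PB b x, st.PS, st.M⟩ = Phi st - (x - st.PB b) := by
  have := Fintype.sum_update_sub_sum st.PB b x
  simp only [phi_eq_sum_sub_sum_add_card]
  linarith

lemma phi_update_offer [DecidableEq S] :
    Phi ⟨st.PB, Function.update st.PS s x, st.M⟩ = Phi st - (st.PS s - x) := by
  have := Fintype.sum_update_sub_sum st.PS s x
  simp only [phi_eq_sum_sub_sum_add_card]
  linarith

lemma phi_matchPair [DecidableEq B] [DecidableEq S] :
    Phi (matchPair st b s x) = Phi st - (st.PS s - st.PB b) := by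
  have := Fintype.sum_update_sub_sum st.PB b x
  have := Fintype.sum_update_sub_sum st.PS s x
  simp only [phi_eq_sum_sub_sum_add_card, matchPair]
  linarith

end Potential

structure PriceInvariant {B S : Type*} (ε : ℝ) (st : MState B S) : Prop where
  bid_mem : ∀ b, IsGridPrice ε (st.PB b)
  offer_mem : ∀ s, IsGridPrice ε (st.PS s)
  unmatched_bid_le : ∀ b s, ¬ BMatched st b → st.PB b ≤ st.PS s
  le_unmatched_offer : ∀ b s, ¬ SMatched st s → st.PB b ≤ st.PS s
  matched_eq : ∀ p ∈ st.M, st.PB p.1 = st.PS p.2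

namespace PriceInvariant

variable {B S : Type*} {ε x : ℝ} {st : MState B S} {b : B} {s : S}

lemma update_bid [DecidableEq B] (hI : PriceInvariant ε st) (hb : ¬ BMatched st b)
    (hx : IsGridPrice ε x) (hle : ∀ s, x ≤ st.PS s) :
    PriceInvariant ε ⟨Function.update st.PB b x, st.PS, st.M⟩ where
  bid_mem := forall_isGridPrice_update hI.bid_mem hx
  offer_mem := hI.offer_mem
  unmatched_bid_le b₂ s₂ hb₂ := by
    rcases eq_or_ne b₂ b with rfl | hne
    · simpa using hle s₂
    · simpa [hne] using hI.unmatched_bid_le b₂ s₂ hb₂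
  le_unmatched_offer b₂ s₂ hs₂ := by
    rcases eq_or_ne b₂ b with rfl | hne
    · simpa using hle s₂
    · simpa [hne] using hI.le_unmatched_offer b₂ s₂ hs₂
  matched_eq p hp := by
    have hne : p.1 ≠ b := by rintro rfl; exact hb ⟨p.2, hp⟩
    simpa [hne] using hI.matched_eq p hp

lemma update_offer [DecidableEq S] (hI : PriceInvariant ε st) (hs : ¬ SMatched st s)
    (hx : IsGridPrice ε x) (hle : ∀ b, st.PB b ≤ x) :
    PriceInvariant ε ⟨st.PB, Function.update st.PS s x, st.M⟩ where
  bid_mem := hI.bid_mem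
  offer_mem := forall_isGridPrice_update hI.offer_mem hx
  unmatched_bid_le b₂ s₂ hb₂ := by
    rcases eq_or_ne s₂ s with rfl | hne
    · simpa using hle b₂
    · simpa [hne] using hI.unmatched_bid_le b₂ s₂ hb₂
  le_unmatched_offer b₂ s₂ hs₂ := by
    rcases eq_or_ne s₂ s with rfl | hne
    · simpa using hle b₂
    · simpa [hne] using hI.le_unmatched_offer b₂ s₂ hs₂
  matched_eq p hp := by
    have hne : p.2 ≠ s := by rintro rfl; exact hs ⟨p.1, hp⟩
    simpa [hne] using hI.matched_eq p hp

lemma matchPair [DecidableEq B] [DecidableEq S] (hI : PriceInvariant ε st)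
    (hx : IsGridPrice ε x)
    (hbuyers : ∀ b₂ s₂, b₂ ≠ b → (¬ BMatched st b₂ ∨ (b₂, s) ∈ st.M) →
      st.PB b₂ ≤ Function.update st.PS s x s₂)
    (hsellers : ∀ b₂ s₂, s₂ ≠ s → (¬ SMatched st s₂ ∨ (b, s₂) ∈ st.M) →
      Function.update st.PB b x b₂ ≤ st.PS s₂) :
    PriceInvariant ε (matchPair st b s x) where
  bid_mem := forall_isGridPrice_update hI.bid_mem hx
  offer_mem := forall_isGridPrice_update hI.offer_mem hx
  unmatched_bid_le b₂ s₂ hb₂ := by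
    obtain ⟨hne, hb₂⟩ := not_bMatched_matchPair hb₂
    simpa [_root_.matchPair, hne] using hbuyers b₂ s₂ hne hb₂
  le_unmatched_offer b₂ s₂ hs₂ := by
    obtain ⟨hne, hs₂⟩ := not_sMatched_matchPair hs₂
    simpa [_root_.matchPair, hne] using hsellers b₂ s₂ hne hs₂
  matched_eq p hp := by
    rcases mem_matchPair_M.1 hp with rfl | ⟨hp, hb, hs⟩
    · simp [_root_.matchPair]
    · simpa [_root_.matchPair, hb, hs] using hI.matched_eq p hp

section Market

variable [Fintype B] [Fintype S] {Mk : Market B S}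

lemma isGridPrice_bid (hI : PriceInvariant ε st) {b' : ℝ} (hbid : st.PB b ≤ b')
    (hval : b' ≤ Mk.valB b) (hb' : MulEps ε b') : IsGridPrice ε b' :=
  ⟨⟨(hI.bid_mem b).1.1.trans hbid, hval.trans (Mk.valB_le_one b)⟩, hb'⟩

lemma isGridPrice_offer (hI : PriceInvariant ε st) {s' : ℝ} (hoffer : s' ≤ st.PS s)
    (hval : Mk.valS s ≤ s') (hs' : MulEps ε s') : IsGridPrice ε s' :=
  ⟨⟨(Mk.valS_nonneg s).trans hval, hoffer.trans (hI.offer_mem s).1.2⟩, hs'⟩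

lemma of_validStart (hE : Mk.E = univ) (h : ValidStart Mk ε st) : PriceInvariant ε st := by
  obtain ⟨⟨-, hPB, hPS, hM⟩, hE_le, hPB₀, hPS₁, hmulB, hmulS⟩ := h
  have hle : ∀ b s, st.PB b ≤ st.PS s := fun b s => hE_le (b, s) (hE ▸ mem_univ _)
  exact
    { bid_mem := fun b => ⟨⟨hPB₀ b, (hPB b).trans (Mk.valB_le_one b)⟩, hmulB b⟩
      offer_mem := fun s => ⟨⟨(Mk.valS_nonneg s).trans (hPS s), hPS₁ s⟩, hmulS s⟩
      unmatched_bid_le := fun b s _ => hle b s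
      le_unmatched_offer := fun b s _ => hle b s
      matched_eq := fun p hp => (hle p.1 p.2).antisymm (hM p hp) }

lemma mulEps_phi (hI : PriceInvariant ε st) (h1 : MulEps ε 1) : MulEps ε (Phi st) := by
  simp only [mulEps_iff_mem_zmultiples] at h1 ⊢
  exact add_mem (sum_mem fun s _ => mulEps_iff_mem_zmultiples.1 (hI.offer_mem s).2)
    (sum_mem fun b _ => sub_mem h1 (mulEps_iff_mem_zmultiples.1 (hI.bid_mem b).2))

lemma phi_le_card (hI : PriceInvariant ε st) :
    Phi st ≤ Fintype.card B + Fintype.card S := by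
  have hS : ∑ s, st.PS s ≤ ∑ _s : S, (1 : ℝ) := sum_le_sum fun s _ => (hI.offer_mem s).1.2
  have hB : ∑ b, (1 - st.PB b) ≤ ∑ _b : B, (1 : ℝ) :=
    sum_le_sum fun b _ => sub_le_self 1 (hI.bid_mem b).1.1
  simp only [sum_const, card_univ, nsmul_eq_mul, mul_one] at hS hB
  rw [Phi]
  linarith

section Mechanism

variable [DecidableEq B] [DecidableEq S] {st' : MState B S}

lemma buyMatch (hE : Mk.E = univ) (hε : 0 ≤ ε) (hI : PriceInvariant ε st)
    (hb : ¬ BMatched st b) {b' : ℝ} (hbid : st.PB b ≤ b') (hval : b' ≤ Mk.valB b)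
    (hb' : MulEps ε b') (hincr : BuyIncrOK Mk ε st b b')
    (hint : SellerInterested Mk ε st b' b s) :
    PriceInvariant ε (_root_.matchPair st b s b') := by
  have hoffer : st.PS s ≤ b' := hint.offer_le hε
  refine hI.matchPair (hI.isGridPrice_bid hbid hval hb') (fun b₂ s₂ _ hb₂ => ?_)
    (fun b₂ s₂ _ hs₂ => ?_)
  · have hb₂s : st.PB b₂ ≤ st.PS s :=
      hb₂.elim (hI.unmatched_bid_le b₂ s) fun hm => (hI.matched_eq _ hm).le
    rcases eq_or_ne s₂ s with rfl | hne
    · simpa using hb₂s.trans hoffer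
    · rw [Function.update_of_ne hne]
      rcases hb₂ with hb₂ | hm
      · exact hI.unmatched_bid_le b₂ s₂ hb₂
      · -- `b₂` lost `s` to `b`: `P(b₂) = P(s) ≤ b' - ε ≤ P(s₂)`
        have := hint.offer_add_le ⟨b₂, hm⟩
        have := hincr.1 s₂ (hE ▸ mem_univ _)
        linarith
  · have hfree : ¬ SMatched st s₂ := hs₂.resolve_right fun hm => hb ⟨s₂, hm⟩
    rcases eq_or_ne b₂ b with rfl | hne
    · simpa using hincr.2 s₂ (hE ▸ mem_univ _) hfree
    · simpa [hne] using hI.le_unmatched_offer b₂ s₂ hfree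

lemma sellMatch (hE : Mk.E = univ) (hε : 0 ≤ ε) (hI : PriceInvariant ε st)
    (hs : ¬ SMatched st s) {s' : ℝ} (hoffer : s' ≤ st.PS s) (hval : Mk.valS s ≤ s')
    (hs' : MulEps ε s') (hincr : SellIncrOK Mk ε st s s')
    (hint : BuyerInterested Mk ε st s' s b) :
    PriceInvariant ε (_root_.matchPair st b s s') := by
  have hbid : s' ≤ st.PB b := hint.le_bid hε
  refine hI.matchPair (hI.isGridPrice_offer hoffer hval hs') (fun b₂ s₂ _ hb₂ => ?_)
    (fun b₂ s₂ _ hs₂ => ?_)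
  · have hfree : ¬ BMatched st b₂ := hb₂.resolve_right fun hm => hs ⟨b₂, hm⟩
    rcases eq_or_ne s₂ s with rfl | hne
    · simpa using hincr.2 b₂ (hE ▸ mem_univ _) hfree
    · simpa [hne] using hI.unmatched_bid_le b₂ s₂ hfree
  · have hbs₂ : st.PB b ≤ st.PS s₂ :=
      hs₂.elim (hI.le_unmatched_offer b s₂) fun hm => (hI.matched_eq _ hm).le
    rcases eq_or_ne b₂ b with rfl | hne
    · simpa using hbid.trans hbs₂
    · rw [Function.update_of_ne hne]
      rcases hs₂ with hs₂ | hm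
      · exact hI.le_unmatched_offer b₂ s₂ hs₂
      · -- `s₂` lost `b` to `s`: `P(b₂) ≤ s' + ε ≤ P(b) = P(s₂)`
        have := hint.add_le_bid ⟨s₂, hm⟩
        have := hincr.1 b₂ (hE ▸ mem_univ _)
        linarith

lemma step (hE : Mk.E = univ) (hε : 0 < ε) (hI : PriceInvariant ε st) (h : Step Mk ε st st') :
    PriceInvariant ε st' := by
  cases h with
  | buyBid b b' hb hbid hval hb' _ hni =>
    exact hI.update_bid hb (hI.isGridPrice_bid hbid.le hval hb') fun s =>
      le_offer_of_not_sellerInterested hε (hE ▸ mem_univ _) hb' (hI.offer_mem s).2 (hni s)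
  | sellOffer s s' hs hoffer hval hs' _ hni =>
    exact hI.update_offer hs (hI.isGridPrice_offer hoffer.le hval hs') fun b =>
      bid_le_of_not_buyerInterested hε (hE ▸ mem_univ _) hs' (hI.bid_mem b).2 (hni b)
  | buyMatch b b' s hb hbid hval hb' hincr hint _ =>
    exact buyMatch hE hε.le hI hb hbid hval hb' hincr hint
  | sellMatch s s' b hs hoffer hval hs' hincr hint _ =>
    exact sellMatch hE hε.le hI hs hoffer hval hs' hincr hint

lemma of_reachable (hE : Mk.E = univ) (hε : 0 < ε) {st₀ : MState B S}
    (h₀ : ValidStart Mk ε st₀) (hr : Reachable Mk ε st₀ st) : PriceInvariant ε st := by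
  induction hr with
  | refl => exact of_validStart hE h₀
  | tail _ hstep hI => exact hI.step hE hε hstep

lemma phi_le_of_step (hI : PriceInvariant ε st) (h : Step Mk ε st st') : Phi st' ≤ Phi st := by
  cases h with
  | buyBid b b' _ hbid =>
    rw [phi_update_bid]
    linarith
  | sellOffer s s' _ hoffer =>
    rw [phi_update_offer]
    linarith
  | buyMatch b b' s hb =>
    rw [phi_matchPair]
    linarith [hI.unmatched_bid_le b s hb]
  | sellMatch s s' b hs =>
    rw [phi_matchPair]
    linarith [hI.le_unmatched_offer b s hs]

end Mechanism

end Market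

end PriceInvariant

/-- on a complete bipartite trading graph (with `1` an integer multiple
of `ε`), the potential `Φ_P` is an integer multiple of `ε`, bounded above by `n`, and
non-increasing along any step that keeps the number of matched pairs constant. -/
theorem potential_nonincreasing_complete
    (Mk : Market B S) (hE : Mk.E = Finset.univ) (ε : ℝ) (hε : 0 < ε)
    (h1 : MulEps ε 1)
    (st₀ st : MState B S) (h₀ : ValidStart Mk ε st₀) (hr : Reachable Mk ε st₀ st) :
    MulEps ε (Phi st) ∧
    Phi st ≤ (Fintype.card B + Fintype.card S : ℝ) ∧
    ∀ st', Step Mk ε st st' → st.M.card = st'.M.card → Phi st' ≤ Phi st := by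
  have hI := PriceInvariant.of_reachable hE hε h₀ hr
  exact ⟨hI.mulEps_phi h1, hI.phi_le_card, fun st' h _ => hI.phi_le_of_step h⟩
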